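/- Let σ consist of a single binary relation symbol R and let A, B be the valued σ-structures with A = B = {0,1}, R^A(a,a) = R^B(a,a) = 3 for a ∈ {0,1}, and R^A(a,b) = 2, R^B(a,b) = 0 for a ≠ b. Then SA¹ decides PVCSP(A,B): for every non-negative finite-valued σ-structure I, Opt(I,B) ≤ Opt^{SA¹}(I,A). -/
import Mathlib


open scoped BigOperators Classical

namespace PVCSP

/-! ## Valued structures -/

/-- The value `Val(I,A,h)` of an assignment `h : I → A`, where the input structure is
given by weights `vI` and the template structure by costs `vA` (in `ℚ ∪ {∞}`). -/
def Val {σ : Type} [Fintype σ] (ar : σ → ℕ) {I A : Type} [Fintype I]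
    (vI : ∀ R : σ, (Fin (ar R) → I) → ℚ)
    (vA : ∀ R : σ, (Fin (ar R) → A) → WithTop ℚ) (h : I → A) : WithTop ℚ :=
  ∑ R : σ, ∑ v : Fin (ar R) → I, (vI R v : WithTop ℚ) * vA R (fun i => h (v i))

/-- `Opt(I,A)`: the minimum value over all assignments. -/
def Opt {σ : Type} [Fintype σ] (ar : σ → ℕ) {I A : Type} [Fintype I] [DecidableEq I]
    [Fintype A]
    (vI : ∀ R : σ, (Fin (ar R) → I) → ℚ)
    (vA : ∀ R : σ, (Fin (ar R) → A) → WithTop ℚ) : WithTop ℚ :=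
  (Finset.univ : Finset (I → A)).inf fun h => Val ar vI vA h

/-- Non-negativity of an input (finite-valued) structure. -/
def NNeg {σ : Type} (ar : σ → ℕ) {I : Type}
    (vI : ∀ R : σ, (Fin (ar R) → I) → ℚ) : Prop :=
  ∀ R v, 0 ≤ vI R v

/-- A fractional homomorphism from `A` to `B`. -/
def IsFracHom {σ : Type} [Fintype σ] (ar : σ → ℕ) {A B : Type}
    [Fintype A] [DecidableEq A] [Fintype B]
    (vA : ∀ R : σ, (Fin (ar R) → A) → WithTop ℚ)
    (vB : ∀ R : σ, (Fin (ar R) → B) → WithTop ℚ)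
    (μ : (A → B) → ℚ) : Prop :=
  (∀ f, 0 ≤ μ f) ∧ (∑ f : A → B, μ f = 1) ∧
    ∀ (R : σ) (a : Fin (ar R) → A),
      ∑ f : A → B, (μ f : WithTop ℚ) * vB R (fun i => f (a i)) ≤ vA R a

/-- A symmetric `n`-ary operation. -/
def IsSymmetricOp {A B : Type} {n : ℕ} (f : (Fin n → A) → B) : Prop :=
  ∀ (ρ : Equiv.Perm (Fin n)) (x : Fin n → A), f (fun i => x (ρ i)) = f x

/-- An `n`-ary fractional polymorphism of the pair `(A,B)`. -/
def IsFracPoly {σ : Type} [Fintype σ] (ar : σ → ℕ) {A B : Type}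
    [Fintype A] [DecidableEq A] [Fintype B]
    (vA : ∀ R : σ, (Fin (ar R) → A) → WithTop ℚ)
    (vB : ∀ R : σ, (Fin (ar R) → B) → WithTop ℚ)
    (n : ℕ) (ω : ((Fin n → A) → B) → ℚ) : Prop :=
  (∀ f, 0 ≤ ω f) ∧ (∑ f : (Fin n → A) → B, ω f = 1) ∧
    ∀ (R : σ) (a : Fin n → (Fin (ar R) → A)),
      ∑ f : (Fin n → A) → B, (ω f : WithTop ℚ) * vB R (fun j => f (fun i => a i j))
        ≤ ((((n : ℚ)⁻¹ : ℚ)) : WithTop ℚ) * ∑ i : Fin n, vA R (a i)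

/-- A dual fractional homomorphism from `I` to `J` (both non-negative finite-valued). -/
def IsDualFracHom {σ : Type} [Fintype σ] (ar : σ → ℕ) {I J : Type}
    [Fintype I] [DecidableEq I] [Fintype J] [DecidableEq J]
    (vI : ∀ R : σ, (Fin (ar R) → I) → ℚ)
    (vJ : ∀ R : σ, (Fin (ar R) → J) → ℚ)
    (η : (I → J) → ℚ) : Prop :=
  (∀ f, 0 ≤ η f) ∧ (∑ f : I → J, η f = 1) ∧
    ∀ (R : σ) (u : Fin (ar R) → J),
      ∑ f : I → J, η f *
          ∑ v ∈ Finset.univ.filter (fun v : Fin (ar R) → I => (fun i => f (v i)) = u), vI R v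
        ≤ vJ R u

/-! ## Linear programming relaxations -/

/-- Canonical embedding of `ℚ ∪ {∞}` into the extended reals. -/
noncomputable def toE (x : WithTop ℚ) : EReal :=
  x.recTopCoe ⊤ (fun q => ((q : ℝ) : EReal))

/-- The objective value of an LP solution `pc`. -/
def objVal {σ : Type} [Fintype σ] (ar : σ → ℕ) {I A : Type} [Fintype I] [Fintype A]
    (vI : ∀ R : σ, (Fin (ar R) → I) → ℚ)
    (vA : ∀ R : σ, (Fin (ar R) → A) → WithTop ℚ)
    (pc : ∀ R : σ, (Fin (ar R) → I) → (Fin (ar R) → A) → ℚ) : WithTop ℚ :=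
  ∑ R : σ, ∑ v : Fin (ar R) → I, ∑ a : Fin (ar R) → A,
    (pc R v a : WithTop ℚ) * ((vI R v : WithTop ℚ) * vA R a)

/-- Feasibility for the basic linear programming relaxation `BLP(I,A)`. -/
def BLPFeas {σ : Type} [Fintype σ] (ar : σ → ℕ) {I A : Type} [Fintype I] [Fintype A]
    [DecidableEq A]
    (vI : ∀ R : σ, (Fin (ar R) → I) → ℚ)
    (vA : ∀ R : σ, (Fin (ar R) → A) → WithTop ℚ)
    (pv : I → A → ℚ)
    (pc : ∀ R : σ, (Fin (ar R) → I) → (Fin (ar R) → A) → ℚ) : Prop :=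
  (∀ R v a, 0 < vI R v → 0 ≤ pc R v a) ∧
  (∀ u : I, ∑ a : A, pv u a = 1) ∧
  (∀ R v, 0 < vI R v → ∀ (i : Fin (ar R)) (a : A),
      pv (v i) a = ∑ t ∈ Finset.univ.filter (fun t : Fin (ar R) → A => t i = a), pc R v t) ∧
  (∀ R v, 0 < vI R v → ∀ t : Fin (ar R) → A, vA R t = ⊤ → pc R v t = 0)

/-- Feasibility for the Sherali–Adams relaxation `SA¹(I,A)`. -/
def SA1Feas {σ : Type} [Fintype σ] (ar : σ → ℕ) {I A : Type} [Fintype I] [Fintype A]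
    [DecidableEq A]
    (vI : ∀ R : σ, (Fin (ar R) → I) → ℚ)
    (vA : ∀ R : σ, (Fin (ar R) → A) → WithTop ℚ)
    (pv : I → A → ℚ)
    (pc : ∀ R : σ, (Fin (ar R) → I) → (Fin (ar R) → A) → ℚ) : Prop :=
  BLPFeas ar vI vA pv pc ∧
  (∀ R v, 0 < vI R v → ∀ t : Fin (ar R) → A,
      (∃ i j, v i = v j ∧ t i ≠ t j) → pc R v t = 0)

/-- The optimal value `Opt^BLP(I,A)` (equal to `⊤` if the program is infeasible). -/
noncomputable def OptBLP {σ : Type} [Fintype σ] (ar : σ → ℕ) {I A : Type}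
    [Fintype I] [Fintype A] [DecidableEq A]
    (vI : ∀ R : σ, (Fin (ar R) → I) → ℚ)
    (vA : ∀ R : σ, (Fin (ar R) → A) → WithTop ℚ) : EReal :=
  sInf { x : EReal | ∃ pv pc, BLPFeas ar vI vA pv pc ∧ x = toE (objVal ar vI vA pc) }

/-- The optimal value `Opt^{SA¹}(I,A)` (equal to `⊤` if the program is infeasible). -/
noncomputable def OptSA1 {σ : Type} [Fintype σ] (ar : σ → ℕ) {I A : Type}
    [Fintype I] [Fintype A] [DecidableEq A]
    (vI : ∀ R : σ, (Fin (ar R) → I) → ℚ)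
    (vA : ∀ R : σ, (Fin (ar R) → A) → WithTop ℚ) : EReal :=
  sInf { x : EReal | ∃ pv pc, SA1Feas ar vI vA pv pc ∧ x = toE (objVal ar vI vA pc) }

/-- The structure `LP^m(A)` on the universe of `m`-element multisets over `A`. -/
def lpPow {σ : Type} [Fintype σ] (ar : σ → ℕ) {A : Type} [Fintype A] [DecidableEq A]
    (m : ℕ) (vA : ∀ R : σ, (Fin (ar R) → A) → WithTop ℚ) :
    ∀ R : σ, (Fin (ar R) → Sym A m) → WithTop ℚ :=
  fun R s =>
    ((((m : ℚ)⁻¹ : ℚ)) : WithTop ℚ) *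
      ((Finset.univ.filter (fun t : Fin (ar R) → (Fin m → A) =>
          ∀ j, Multiset.map (t j) Finset.univ.val = Sym.toMultiset (s j))).inf
        (fun t => ∑ i : Fin m, vA R (fun j => t j i)))

/-! ## The graph of an input structure and iterated degrees -/

/-- Potential constraint vertices of the graph `G(I)`. -/
abbrev CVert (σ : Type) (ar : σ → ℕ) (I : Type) := Σ R : σ, (Fin (ar R) → I)

/-- The label of the edge between variable `u` and constraint `c`: the set of
coordinates of `c` at which `u` occurs. -/
def edgeLab {σ : Type} {ar : σ → ℕ} {I : Type} [DecidableEq I]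
    (u : I) (c : CVert σ ar I) : Finset ℕ :=
  (Finset.univ.filter (fun i : Fin (ar c.1) => c.2 i = u)).image Fin.val

/-- The type of `k`-th iterated degrees over signature `σ`. -/
def Deg (σ : Type) : ℕ → Type
  | 0 => Option (σ × ℚ)
  | k+1 => Multiset (Finset ℕ × Deg σ k)

/-- The `k`-th iterated degree of a vertex of `G(I)` (a variable or a constraint). -/
def degV {σ : Type} [Fintype σ] (ar : σ → ℕ) {I : Type} [Fintype I] [DecidableEq I]
    (vI : ∀ R : σ, (Fin (ar R) → I) → ℚ) :
    (k : ℕ) → (I ⊕ CVert σ ar I) → Deg σ k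
  | 0, Sum.inl _ => (none : Option (σ × ℚ))
  | 0, Sum.inr c => some (c.1, vI c.1 c.2)
  | k+1, Sum.inl u =>
      ((Finset.univ.filter
          (fun c : CVert σ ar I => 0 < vI c.1 c.2 ∧ ∃ i, c.2 i = u)).val).map
        (fun c => (edgeLab u c, degV ar vI k (Sum.inr c)))
  | k+1, Sum.inr c =>
      ((Finset.univ.filter (fun u : I => ∃ i, c.2 i = u)).val).map
        (fun u => (edgeLab u c, degV ar vI k (Sum.inl u)))

/-- The full iterated degree type. -/
def IterDeg (σ : Type) : Type := ∀ k : ℕ, Deg σ k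

/-- The iterated degree `δ(x)` of a vertex. -/
def itdeg {σ : Type} [Fintype σ] (ar : σ → ℕ) {I : Type} [Fintype I] [DecidableEq I]
    (vI : ∀ R : σ, (Fin (ar R) → I) → ℚ) (x : I ⊕ CVert σ ar I) : IterDeg σ :=
  fun k => degV ar vI k x

/-- The iterated degree sequence `δ(I)` (a multiset over all vertices of `G(I)`). -/
def degSeq {σ : Type} [Fintype σ] (ar : σ → ℕ) {I : Type} [Fintype I] [DecidableEq I]
    (vI : ∀ R : σ, (Fin (ar R) → I) → ℚ) : Multiset (IterDeg σ) :=
  (Finset.univ.val.map (fun u : I => itdeg ar vI (Sum.inl u))) +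
  ((Finset.univ.filter (fun c : CVert σ ar I => 0 < vI c.1 c.2)).val.map
      (fun c => itdeg ar vI (Sum.inr c)))

/-- Adjacency in the graph `G(I)`. -/
def Adj {σ : Type} (ar : σ → ℕ) {I : Type}
    (vI : ∀ R : σ, (Fin (ar R) → I) → ℚ) :
    (I ⊕ CVert σ ar I) → (I ⊕ CVert σ ar I) → Prop
  | Sum.inl u, Sum.inr c => 0 < vI c.1 c.2 ∧ ∃ i, c.2 i = u
  | Sum.inr c, Sum.inl u => 0 < vI c.1 c.2 ∧ ∃ i, c.2 i = u
  | _, _ => False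

/-- Actual vertices of `G(I)`: all variables and the positive-weight constraints. -/
def IsVert {σ : Type} (ar : σ → ℕ) {I : Type}
    (vI : ∀ R : σ, (Fin (ar R) → I) → ℚ) : (I ⊕ CVert σ ar I) → Prop
  | Sum.inl _ => True
  | Sum.inr c => 0 < vI c.1 c.2

/-- Connectedness of the input structure `I` (i.e. of its graph `G(I)`). -/
def Conn {σ : Type} (ar : σ → ℕ) {I : Type}
    (vI : ∀ R : σ, (Fin (ar R) → I) → ℚ) : Prop :=
  Nonempty I ∧ ∀ x y, IsVert ar vI x → IsVert ar vI y →
    Relation.ReflTransGen (Adj ar vI) x y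

/-- Weak congruence: `|J| ⬝ δ(I) = |I| ⬝ δ(J)`. -/
def WeakCongr {σ : Type} [Fintype σ] (ar : σ → ℕ) {I J : Type}
    [Fintype I] [DecidableEq I] [Fintype J] [DecidableEq J]
    (vI : ∀ R : σ, (Fin (ar R) → I) → ℚ)
    (vJ : ∀ R : σ, (Fin (ar R) → J) → ℚ) : Prop :=
  (Fintype.card J) • degSeq ar vI = (Fintype.card I) • degSeq ar vJ

/-- Membership of a variable in the connected component of the variable `x₀`. -/
def InComp {σ : Type} (ar : σ → ℕ) {I : Type}
    (vI : ∀ R : σ, (Fin (ar R) → I) → ℚ) (x₀ u : I) : Prop :=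
  Relation.ReflTransGen (Adj ar vI) (Sum.inl x₀) (Sum.inl u)


abbrev ar2 : Unit → ℕ := fun _ => 2

def vA2 : ∀ R : Unit, (Fin (ar2 R) → Fin 2) → WithTop ℚ :=
  fun _ t => if t 0 = t 1 then 3 else 2

def vB2 : ∀ R : Unit, (Fin (ar2 R) → Fin 2) → WithTop ℚ :=
  fun _ t => if t 0 = t 1 then 3 else 0

/-! ## Auxiliary lemmas for `stmt_18` -/

lemma toE_mono : Monotone toE := by
  intro x y hxy
  induction y using WithTop.recTopCoe with
  | top => simp [toE]
  | coe q =>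
    induction x using WithTop.recTopCoe with
    | top => exact absurd hxy (by simp)
    | coe p =>
      have hpq : p ≤ q := by exact_mod_cast hxy
      simp only [toE, WithTop.recTopCoe_coe]
      exact_mod_cast hpq

lemma fin2_add_one_eq_iff : ∀ y z : Fin 2, y + 1 = z ↔ ¬ y = z := by decide

lemma sum_eq_sum_ne {I : Type} [Fintype I] [DecidableEq I] (a b : I) (hab : a ≠ b) :
    (∑ h : I → Fin 2, (if h a = h b then (1:ℚ) else 0)) =
      ∑ h : I → Fin 2, (if h a = h b then (0:ℚ) else 1) := by
  have hinv : Function.Involutive (fun h : I → Fin 2 => Function.update h a (h a + 1)) := by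
    intro h
    funext x
    rcases eq_or_ne x a with rfl | hx
    · simp only [Function.update_self]
      exact (by decide : ∀ y : Fin 2, y + 1 + 1 = y) (h x)
    · simp [Function.update_of_ne hx]
  refine Fintype.sum_equiv (Function.Involutive.toPerm _ hinv) _ _ ?_
  intro h
  have ha : (Function.Involutive.toPerm _ hinv) h a = h a + 1 := Function.update_self _ _ _
  have hb : (Function.Involutive.toPerm _ hinv) h b = h b := Function.update_of_ne (Ne.symm hab) _ _
  rw [ha, hb]
  rcases eq_or_ne (h a) (h b) with he | he
  · rw [if_pos he, if_neg (by rw [fin2_add_one_eq_iff]; exact not_not_intro he)]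
  · rw [if_neg he, if_pos ((fin2_add_one_eq_iff _ _).2 he)]

lemma sum_ite3_le {I : Type} [Fintype I] [DecidableEq I] (a b : I) (hab : a ≠ b) :
    (∑ h : I → Fin 2, (if h a = h b then (3:ℚ) else 0)) ≤ ∑ h : I → Fin 2, (2:ℚ) := by
  have hS0 : (0:ℚ) ≤ ∑ h : I → Fin 2, (if h a = h b then (1:ℚ) else 0) :=
    Finset.sum_nonneg fun h _ => by positivity
  have h3 : (∑ h : I → Fin 2, (if h a = h b then (3:ℚ) else 0)) =
      3 * ∑ h : I → Fin 2, (if h a = h b then (1:ℚ) else 0) := by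
    rw [Finset.mul_sum]
    exact Finset.sum_congr rfl fun h _ => by split_ifs <;> ring
  have hcard : (∑ h : I → Fin 2, (2:ℚ)) =
      2 * ((∑ h : I → Fin 2, (if h a = h b then (1:ℚ) else 0)) +
        ∑ h : I → Fin 2, (if h a = h b then (0:ℚ) else 1)) := by
    rw [← Finset.sum_add_distrib, Finset.mul_sum]
    exact Finset.sum_congr rfl fun h _ => by split_ifs <;> ring
  rw [h3, hcard, ← sum_eq_sum_ne a b hab]
  nlinarith [hS0]

lemma exists_good {I : Type} [Fintype I] [DecidableEq I]
    (w : (Fin 2 → I) → ℚ) (hNN : ∀ v, 0 ≤ w v) :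
    ∃ h : I → Fin 2,
      (∑ v : Fin 2 → I, w v * (if h (v 0) = h (v 1) then (3:ℚ) else 0))
        ≤ ∑ v : Fin 2 → I, w v * (if v 0 = v 1 then (3:ℚ) else 2) := by
  have hne : (Finset.univ : Finset (I → Fin 2)).Nonempty := Finset.univ_nonempty
  have hsum : ∑ h : I → Fin 2, (∑ v : Fin 2 → I, w v * (if h (v 0) = h (v 1) then (3:ℚ) else 0))
      ≤ ∑ h : I → Fin 2, (∑ v : Fin 2 → I, w v * (if v 0 = v 1 then (3:ℚ) else 2)) := by
    rw [Finset.sum_comm, Finset.sum_comm (s := Finset.univ) (t := Finset.univ)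
      (f := fun h (v : Fin 2 → I) => w v * (if v 0 = v 1 then (3:ℚ) else 2))]
    refine Finset.sum_le_sum fun v _ => ?_
    rw [← Finset.mul_sum, ← Finset.mul_sum]
    refine mul_le_mul_of_nonneg_left ?_ (hNN v)
    rcases eq_or_ne (v 0) (v 1) with hv | hv
    · refine le_of_eq (Finset.sum_congr rfl fun h _ => ?_)
      rw [if_pos (by rw [hv]), if_pos hv]
    · calc (∑ h : I → Fin 2, (if h (v 0) = h (v 1) then (3:ℚ) else 0))
          ≤ ∑ h : I → Fin 2, (2:ℚ) := sum_ite3_le _ _ hv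
        _ = ∑ h : I → Fin 2, (if v 0 = v 1 then (3:ℚ) else 2) :=
            Finset.sum_congr rfl fun _ _ => by rw [if_neg hv]
  obtain ⟨h, -, hh⟩ := Finset.exists_le_of_sum_le hne hsum
  exact ⟨h, hh⟩

theorem stmt_18 :
    ∀ (I : Type) [Fintype I] [DecidableEq I]
      (vI : ∀ R : Unit, (Fin (ar2 R) → I) → ℚ), NNeg ar2 vI →
      toE (Opt ar2 vI vB2) ≤ OptSA1 ar2 vI vA2 := by
  intro I _ _ vI hNN
  apply le_sInf
  rintro x ⟨pv, pc, ⟨⟨hpc0, hpv1, hmarg, -⟩, hsa⟩, rfl⟩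
  -- total probability of each positive constraint
  have hpcsum : ∀ v : Fin 2 → I, 0 < vI () v → ∑ t : Fin 2 → Fin 2, pc () v t = 1 := by
    intro v hv
    calc ∑ t : Fin 2 → Fin 2, pc () v t
        = ∑ a : Fin 2, ∑ t ∈ Finset.univ.filter (fun t : Fin 2 → Fin 2 => t 0 = a),
            pc () v t := (Finset.sum_fiberwise _ _ _).symm
      _ = ∑ a : Fin 2, pv (v 0) a :=
            Finset.sum_congr rfl fun a _ => (hmarg () v hv 0 a).symm
      _ = 1 := hpv1 (v 0)
  set Q : ℚ := ∑ v : Fin 2 → I, ∑ t : Fin 2 → Fin 2,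
      pc () v t * (vI () v * (if t 0 = t 1 then (3:ℚ) else 2)) with hQ
  have hobj : objVal ar2 vI vA2 pc = (Q : WithTop ℚ) := by
    have hterm : ∀ (v : Fin 2 → I) (t : Fin 2 → Fin 2),
        (pc () v t : WithTop ℚ) * ((vI () v : WithTop ℚ) * vA2 () t)
          = ((pc () v t * (vI () v * (if t 0 = t 1 then (3:ℚ) else 2)) : ℚ) : WithTop ℚ) := by
      intro v t
      rw [vA2]
      split_ifs <;> push_cast <;> rfl
    calc objVal ar2 vI vA2 pc
        = ∑ v : Fin 2 → I, ∑ t : Fin 2 → Fin 2,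
            ((pc () v t * (vI () v * (if t 0 = t 1 then (3:ℚ) else 2)) : ℚ) : WithTop ℚ) := by
          rw [objVal, Fintype.sum_unique]
          exact Finset.sum_congr rfl fun v _ => Finset.sum_congr rfl fun t _ => hterm v t
      _ = (Q : WithTop ℚ) := by rw [hQ]; push_cast; rfl
  have hval : ∀ h : I → Fin 2, Val ar2 vI vB2 h =
      ((∑ v : Fin 2 → I, vI () v * (if h (v 0) = h (v 1) then (3:ℚ) else 0) : ℚ) : WithTop ℚ) := by
    intro h
    have hterm : ∀ v : Fin 2 → I,
        (vI () v : WithTop ℚ) * vB2 () (fun i => h (v i))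
          = ((vI () v * (if h (v 0) = h (v 1) then (3:ℚ) else 0) : ℚ) : WithTop ℚ) := by
      intro v
      rw [vB2]
      split_ifs <;> push_cast <;> rfl
    calc Val ar2 vI vB2 h
        = ∑ v : Fin 2 → I,
            ((vI () v * (if h (v 0) = h (v 1) then (3:ℚ) else 0) : ℚ) : WithTop ℚ) := by
          rw [Val, Fintype.sum_unique]
          exact Finset.sum_congr rfl fun v _ => hterm v
      _ = _ := by push_cast; rfl
  -- the LP value dominates the deterministic bound
  have hb : (∑ v : Fin 2 → I, vI () v * (if v 0 = v 1 then (3:ℚ) else 2)) ≤ Q := by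
    rw [hQ]
    refine Finset.sum_le_sum fun v _ => ?_
    by_cases hv : 0 < vI () v
    · rcases eq_or_ne (v 0) (v 1) with hvv | hvv
      · have heq : ∑ t : Fin 2 → Fin 2, pc () v t * (vI () v * (if t 0 = t 1 then (3:ℚ) else 2))
            = ∑ t : Fin 2 → Fin 2, pc () v t * (vI () v * 3) := by
          refine Finset.sum_congr rfl fun t _ => ?_
          rcases eq_or_ne (t 0) (t 1) with ht | ht
          · rw [if_pos ht]
          · rw [hsa () v hv t ⟨0, 1, hvv, ht⟩, zero_mul, zero_mul]
        rw [heq, ← Finset.sum_mul, hpcsum v hv, one_mul, if_pos hvv]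
      · rw [if_neg hvv]
        calc vI () v * 2 = ∑ t : Fin 2 → Fin 2, pc () v t * (vI () v * 2) := by
              rw [← Finset.sum_mul, hpcsum v hv, one_mul]
          _ ≤ ∑ t : Fin 2 → Fin 2, pc () v t * (vI () v * (if t 0 = t 1 then (3:ℚ) else 2)) := by
              refine Finset.sum_le_sum fun t _ => ?_
              refine mul_le_mul_of_nonneg_left ?_ (hpc0 () v t hv)
              refine mul_le_mul_of_nonneg_left ?_ (hNN () v)
              split_ifs <;> norm_num
    · have h0 : vI () v = 0 := le_antisymm (not_lt.1 hv) (hNN () v)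
      simp [h0]
  obtain ⟨h, hh⟩ := exists_good (vI ()) (hNN ())
  calc toE (Opt ar2 vI vB2)
      ≤ toE (Val ar2 vI vB2 h) := toE_mono (Finset.inf_le (Finset.mem_univ h))
    _ ≤ toE (objVal ar2 vI vA2 pc) := by
        rw [hval h, hobj]
        exact toE_mono (WithTop.coe_le_coe.2 (le_trans hh hb))


end PVCSP
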